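/- arXiv:0706.4201 — 3 statements merged into one kernel-verified Lean document; each statement's English description precedes it below -/
import Mathlib

section
/- Let T^d=(N,E,d) be a tree diagram with n nodes and let f:ℝ^n→ℝ be a continuously differentiable function. Define functions η_i of (t,x_1,…,x_n) recursively by η_1(t)=t and, for i≥2 with parent node ι_{p(i)} (the unique node with (ι_{p(i)},ι_i)∈E), η_i(t)=∫_0^t (x_{p(i)} + η_{p(i)}(y))^{d[(ι_{p(i)},ι_i)]} dy. Then u(t,x_1,…,x_n) = f(x_1+η_1(t), x_2+η_2(t), …, x_n+η_n(t)) satisfies the first-order evolution equation ∂_t u = ∂_{x_1}u + Σ_{(ι_i,ι_j)∈E} x_i^{d[(ι_i,ι_j)]} ∂_{x_j}u together with the initial condition u(0,x_1,…,x_n)=f(x_1,…,x_n). -/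
noncomputable section

attribute [local instance] LieRing.ofAssociativeRing

/-- The algebra of linear operators on polynomials in `n` variables (contains the
differential operators with polynomial coefficients). -/
abbrev DiffOp (n : ℕ) : Type := Module.End ℂ (MvPolynomial (Fin n) ℂ)

/-- The partial derivative operator `∂_{x_i}`. -/
noncomputable def pd {n : ℕ} (i : Fin n) : DiffOp n := (MvPolynomial.pderiv i).toLinearMap

/-- The operator of multiplication by `x_i`. -/
noncomputable def mX {n : ℕ} (i : Fin n) : DiffOp n := LinearMap.mulLeft ℂ (MvPolynomial.X i)

/-- The operator of multiplication by the monomial `∏ x_a ^ (j a)`. -/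
noncomputable def mXpow {n : ℕ} (j : Fin n → ℕ) : DiffOp n :=
  LinearMap.mulLeft ℂ (∏ a : Fin n, (MvPolynomial.X a) ^ (j a))

/-- A tree diagram on `n` nodes (nodes `0,…,n-1`, node `0` being the root): every node
`i ≠ 0` has a unique parent `parent i < i`, and the edge `(parent i, i)` carries a
positive integral weight `weight i`. -/
structure TreeDiagram (n : ℕ) [NeZero n] where
  parent : Fin n → Fin n
  parent_lt : ∀ i : Fin n, i ≠ 0 → parent i < i
  weight : Fin n → ℕ
  weight_pos : ∀ i : Fin n, i ≠ 0 → 0 < weight i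

variable {n : ℕ} [NeZero n]

/-- The clan of a node: the set of nodes on the unique path from the root to `i`
(including both ends). -/
def clanSet (T : TreeDiagram n) : Fin n → Finset (Fin n)
  | i => if h : i = 0 then {i} else insert i (clanSet T (T.parent i))
termination_by i => i.val
decreasing_by exact T.parent_lt i h

/-- The product of the weights of all edges along the path from the root to `i`. -/
def chainWt (T : TreeDiagram n) : Fin n → ℕ
  | i => if h : i = 0 then 1 else chainWt T (T.parent i) * T.weight i
termination_by i => i.val
decreasing_by exact T.parent_lt i h

/-- `j` is a descendant of `i`. -/
def Desc (T : TreeDiagram n) (i j : Fin n) : Prop := i ≠ j ∧ i ∈ clanSet T j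

/-- A node is a tip if it has no children. -/
def IsTip (T : TreeDiagram n) (i : Fin n) : Prop := ∀ j : Fin n, j ≠ 0 → T.parent j ≠ i

/-- Generators `∂_{x_1}` and `x_i^{d[(ι_i,ι_j)]} ∂_{x_j}` for edges `(ι_i,ι_j)`. -/
def upGens (T : TreeDiagram n) : Set (DiffOp n) :=
  {pd (0 : Fin n)} ∪ {A | ∃ j : Fin n, j ≠ 0 ∧ A = (mX (T.parent j)) ^ (T.weight j) * pd j}

/-- Generators `∂_{x_r}` for tips `ι_r` and `x_j^{d[(ι_i,ι_j)]} ∂_{x_i}` for edges. -/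
def downGens (T : TreeDiagram n) : Set (DiffOp n) :=
  {A | ∃ r : Fin n, IsTip T r ∧ A = pd r} ∪
    {A | ∃ j : Fin n, j ≠ 0 ∧ A = (mX j) ^ (T.weight j) * pd (T.parent j)}

/-- The upward nilpotent Lie algebra `L_0(T^d)`. -/
def upL0 (T : TreeDiagram n) : LieSubalgebra ℂ (DiffOp n) :=
  LieSubalgebra.lieSpan ℂ _ (upGens T)

/-- The downward nilpotent Lie algebra `ℒ_0(T^d)`. -/
def downL0 (T : TreeDiagram n) : LieSubalgebra ℂ (DiffOp n) :=
  LieSubalgebra.lieSpan ℂ _ (downGens T)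

/-- The toral Cartan subalgebra `H = Σ ℂ x_i ∂_{x_i}`. -/
def Hcart (n : ℕ) : Submodule ℂ (DiffOp n) :=
  Submodule.span ℂ (Set.range fun i : Fin n => mX i * pd i)

/-- `L_1(T^d) = H + L_0(T^d)`. -/
def upL1 (T : TreeDiagram n) : Submodule ℂ (DiffOp n) := Hcart n ⊔ (upL0 T).toSubmodule

/-- `ℒ_1(T^d) = H + ℒ_0(T^d)`. -/
def downL1 (T : TreeDiagram n) : Submodule ℂ (DiffOp n) := Hcart n ⊔ (downL0 T).toSubmodule

/-- `I` is an abelian (Lie) ideal of `L`. -/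
def IsAbelianIdeal (L I : Submodule ℂ (DiffOp n)) : Prop :=
  I ≤ L ∧ (∀ x ∈ L, ∀ y ∈ I, ⁅x, y⁆ ∈ I) ∧ ∀ x ∈ I, ∀ y ∈ I, ⁅x, y⁆ = (0 : DiffOp n)

/-- The lower central series: `lcs L k = G^{k+1}` in the paper's notation
(`G^1 = G`, `G^{i+1} = [G, G^i]`). -/
def lcs (L : LieSubalgebra ℂ (DiffOp n)) : ℕ → Submodule ℂ (DiffOp n)
  | 0 => L.toSubmodule
  | (k+1) => Submodule.span ℂ {z : DiffOp n | ∃ x ∈ L, ∃ y ∈ lcs L k, z = ⁅x, y⁆}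

/-- Membership in `R_i`: exponent tuples supported on the strict ancestors of `i`
(the clan of `i` with `i` removed) with `Σ_a j_a · d_1⋯d_{s(a)-1} ≤ d_1⋯d_{r-1}`. -/
def memR (T : TreeDiagram n) (i : Fin n) (j : Fin n → ℕ) : Prop :=
  (∀ a : Fin n, a ∉ (clanSet T i).erase i → j a = 0) ∧
    ∑ a ∈ (clanSet T i).erase i, j a * chainWt T a ≤ chainWt T i

/-- `ℓ_i`: the number of exponent tuples in `R_i`. -/
def ellCard (T : TreeDiagram n) (i : Fin n) : ℕ := Nat.card {j : Fin n → ℕ // memR T i j}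

/-- A node is multiplicity-free if the edge to its parent has weight 1. -/
def MultFree (T : TreeDiagram n) (i : Fin n) : Prop := i ≠ 0 ∧ T.weight i = 1

/-- `Υ`: the set of nodes all of whose descendants are multiplicity-free. -/
def Upsilon (T : TreeDiagram n) : Set (Fin n) := {i | ∀ j : Fin n, Desc T i j → MultFree T j}

/-- A set of nodes is independent if no element is a descendant of another. -/
def IndepSet (T : TreeDiagram n) (S : Set (Fin n)) : Prop :=
  ∀ a ∈ S, ∀ b ∈ S, ¬ Desc T a b

/-- The ideal `I(S) = Span{x^{j⃗}∂_{x_i}, x^{j⃗}∂_{x_s} : ι_i ∈ S, j⃗ ∈ R_i, ι_s ∈ D_i}`. -/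
def upIdealS (T : TreeDiagram n) (S : Set (Fin n)) : Submodule ℂ (DiffOp n) :=
  Submodule.span ℂ
    {A : DiffOp n | ∃ i ∈ S, ∃ j : Fin n → ℕ, memR T i j ∧
      ∃ s : Fin n, (s = i ∨ Desc T i s) ∧ A = mXpow j * pd s}

/-- The partial order `⪯` on `R_i`. -/
def Rle (T : TreeDiagram n) (i : Fin n) (j l : Fin n → ℕ) : Prop :=
  ∀ b ∈ (clanSet T i).erase i,
    ∑ a ∈ ((clanSet T i).erase i).filter (fun a => b ∈ clanSet T a),
        j a * (chainWt T a / chainWt T b) ≤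
      ∑ a ∈ ((clanSet T i).erase i).filter (fun a => b ∈ clanSet T a),
        l a * (chainWt T a / chainWt T b)

/-- `W = S ∪ ⋃_{ι_i ∈ S} D_i`. -/
def Wset (T : TreeDiagram n) (S : Set (Fin n)) : Set (Fin n) :=
  {r | ∃ i ∈ S, r = i ∨ Desc T i r}

/-- An admissible pair for abelian ideals of `L_1(T^d)`. -/
structure UpAdmiss (n : ℕ) [NeZero n] (T : TreeDiagram n) where
  S : Set (Fin n)
  K : Fin n → Set (Fin n → ℕ)
  S_ne : S.Nonempty
  S_sub : S ⊆ Upsilon T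
  S_indep : IndepSet T S
  K_out : ∀ r : Fin n, r ∉ Wset T S → K r = ∅
  K_mem : ∀ i ∈ S, ∀ r : Fin n, (r = i ∨ Desc T i r) → ∀ j ∈ K r, memR T i j
  K_indep : ∀ i ∈ S, ∀ r : Fin n, (r = i ∨ Desc T i r) →
    ∀ j ∈ K r, ∀ l ∈ K r, Rle T i j l → Rle T i l j
  K_ne : ∀ i ∈ S, (K i).Nonempty
  K_chain : ∀ i ∈ S, ∀ r : Fin n, (r = i ∨ Desc T i r) → ∀ s : Fin n, Desc T r s →
    ∀ j ∈ K r, ∀ l ∈ K s, ¬ (Rle T i l j ∧ ¬ Rle T i j l)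

/-- The abelian ideal `I[S,{K_r}] = Σ_{ι_s∈W} Σ_{j⃗∈K_s} I[s,j⃗]`. -/
def upAdIdeal (T : TreeDiagram n) (P : UpAdmiss n T) : Submodule ℂ (DiffOp n) :=
  Submodule.span ℂ
    {A : DiffOp n | ∃ i ∈ P.S, ∃ s : Fin n, (s = i ∨ Desc T i s) ∧ ∃ j ∈ P.K s,
      ∃ l : Fin n → ℕ, memR T i l ∧ Rle T i l j ∧
        ∃ r : Fin n, (r = s ∨ Desc T s r) ∧ A = mXpow l * pd r}

instance (T : TreeDiagram n) (i : Fin n) : Decidable (IsTip T i) :=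
  decidable_of_iff (∀ j : Fin n, j ≠ 0 → T.parent j ≠ i) Iff.rfl

instance (T : TreeDiagram n) (i j : Fin n) : Decidable (Desc T i j) :=
  decidable_of_iff (i ≠ j ∧ i ∈ clanSet T j) Iff.rfl

/-- `D_i` as a finset. -/
def Dfin (T : TreeDiagram n) (i : Fin n) : Finset (Fin n) :=
  Finset.univ.filter fun j => Desc T i j

/-- `κ_i`: the product of the weights of all edges inside `F_i = {ι_i} ∪ D_i`. -/
def kappa (T : TreeDiagram n) (i : Fin n) : ℕ := ∏ j ∈ Dfin T i, T.weight j

/-- The product of the weights of the edges on the path from `i` to a descendant `j`: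
`∏_{e ∈ E_{i,j}} d(e)`. -/
def pathWt (T : TreeDiagram n) (i j : Fin n) : ℕ :=
  ∏ a ∈ (clanSet T j) \ (clanSet T i), T.weight a

/-- `κ_{i,j} = κ_i / ∏_{e ∈ E_{i,j}} d(e)`. -/
def kappaIS (T : TreeDiagram n) (i j : Fin n) : ℕ := kappa T i / pathWt T i j

/-- Membership in `ℜ_i`: tuples supported on `D_i` with `Σ_s j_s κ_{i,s} ≤ κ_i`. -/
def memcR (T : TreeDiagram n) (i : Fin n) (j : Fin n → ℕ) : Prop :=
  (∀ a : Fin n, ¬ Desc T i a → j a = 0) ∧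
    ∑ a ∈ Dfin T i, j a * kappaIS T i a ≤ kappa T i

/-- The partial order `⪯` on `ℜ_i`. -/
def cRle (T : TreeDiagram n) (i : Fin n) (j l : Fin n → ℕ) : Prop :=
  ∀ m : Fin n, Desc T i m →
    ∑ r ∈ (clanSet T (T.parent m)) \ (clanSet T i), j r * pathWt T r (T.parent m) ≤
      ∑ r ∈ (clanSet T (T.parent m)) \ (clanSet T i), l r * pathWt T r (T.parent m)

/-- `Φ = {ι_1} ∪ {ι_i : all edges inside the clan of `ι_i` have weight 1}`. -/
def PhiSet (T : TreeDiagram n) : Set (Fin n) :=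
  {i | ∀ a ∈ clanSet T i, a ≠ 0 → T.weight a = 1}

/-- `Ω`: the set of children of the root. -/
def OmegaSet (T : TreeDiagram n) : Set (Fin n) := {i | i ≠ 0 ∧ T.parent i = 0}

/-- The ideal `𝓘(S) = Span{x^{j⃗}∂_{x_s} : ι_i ∈ S, j⃗ ∈ ℜ_i, ι_s ∈ C_i}`. -/
def downIdealS (T : TreeDiagram n) (S : Set (Fin n)) : Submodule ℂ (DiffOp n) :=
  Submodule.span ℂ
    {A : DiffOp n | ∃ i ∈ S, ∃ j : Fin n → ℕ, memcR T i j ∧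
      ∃ s ∈ clanSet T i, A = mXpow j * pd s}

/-- An admissible pair for abelian ideals of `ℒ_1(T^d)`. -/
structure DownAdmiss (n : ℕ) [NeZero n] (T : TreeDiagram n) where
  S : Set (Fin n)
  K : Fin n → Fin n → Set (Fin n → ℕ)
  S_ne : S.Nonempty
  S_sub : S ⊆ PhiSet T
  S_indep : IndepSet T S
  K_out : ∀ i r : Fin n, (i ∉ S ∨ r ∉ clanSet T i) → K i r = ∅
  K_mem : ∀ i ∈ S, ∀ r ∈ clanSet T i, ∀ j ∈ K i r, memcR T i j
  K_indep : ∀ i ∈ S, ∀ r ∈ clanSet T i, ∀ j ∈ K i r, ∀ l ∈ K i r,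
    cRle T i j l → cRle T i l j
  K_ne : ∀ i ∈ S, (K i i).Nonempty
  K_cond : ∀ i ∈ S, ∀ s ∈ clanSet T i, ∀ r ∈ clanSet T s, r ≠ s →
    ∀ j ∈ K i r, ∀ l ∈ K i s, ¬ (cRle T i j l ∧ ¬ cRle T i l j)

/-- The abelian ideal `𝓘[S,{𝒦_r}] = Σ_{ι_s∈W} Σ_{j⃗∈𝒦_s} 𝓘[s,j⃗]`. -/
def downAdIdeal (T : TreeDiagram n) (P : DownAdmiss n T) : Submodule ℂ (DiffOp n) :=
  Submodule.span ℂ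
    {A : DiffOp n | ∃ i ∈ P.S, ∃ s ∈ clanSet T i, ∃ j ∈ P.K i s,
      ∃ l : Fin n → ℕ, memcR T s l ∧ cRle T s l j ∧
        ∃ r ∈ clanSet T s, A = mXpow l * pd r}

end

noncomputable section

/-- `A` acts locally nilpotently at `p`. -/
def LocNilpOn {M : Type} [AddCommGroup M] [Module ℂ M] (A : Module.End ℂ M) (p : M) : Prop :=
  ∃ N : ℕ, ∀ k : ℕ, N ≤ k → (A ^ k) p = 0

open scoped Classical in
/-- `e^A(p) = Σ_k A^k(p)/k!`, a finite sum when `A` acts locally nilpotently at `p`. -/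
noncomputable def expApply {M : Type} [AddCommGroup M] [Module ℂ M]
    (A : Module.End ℂ M) (p : M) : M :=
  if h : LocNilpOn A p then
    ∑ k ∈ Finset.range h.choose, ((k.factorial : ℂ))⁻¹ • (A ^ k) p
  else 0

open scoped Classical in
/-- `θ(A)(q) = Σ_{i≥1} ((−1)^{i−1}/i!) A^{i−1}(q)` where `θ(x) = (1−e^{−x})/x`. -/
noncomputable def thetaApply {M : Type} [AddCommGroup M] [Module ℂ M]
    (A : Module.End ℂ M) (q : M) : M :=
  if h : LocNilpOn A q then
    ∑ k ∈ Finset.range h.choose, ((-1 : ℂ) ^ k * (((k + 1).factorial : ℂ))⁻¹) • (A ^ k) q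
  else 0

abbrev DiffOp' (n : ℕ) : Type := Module.End ℂ (MvPolynomial (Fin n) ℂ)

noncomputable def pd' {n : ℕ} (i : Fin n) : DiffOp' n := (MvPolynomial.pderiv i).toLinearMap
noncomputable def mX' {n : ℕ} (i : Fin n) : DiffOp' n := LinearMap.mulLeft ℂ (MvPolynomial.X i)

/-- `D_i = t(∂_{x_1} + Σ_{r=1}^{i-1} x_r^{m_r} ∂_{x_{r+1}})` (0-based indices). -/
noncomputable def DchainOp (n : ℕ) (hn : 0 < n) (m : ℕ → ℕ) (t : ℂ) (i : ℕ) : DiffOp' n :=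
  t • (pd' (⟨0, hn⟩ : Fin n) +
    ∑ k ∈ Finset.univ.filter (fun k : Fin n => 0 < k.val ∧ k.val < i),
      (mX' (⟨k.val - 1, lt_of_le_of_lt (Nat.sub_le _ _) k.isLt⟩ : Fin n)) ^ (m k.val) * pd' k)

/-- `η_{j+1}` of the chain: `η_1(t) = t`, `η_{j+2}(t) = ∫_0^t (x_{j+1} + η_{j+1}(y))^{m_{j+1}} dy`. -/
noncomputable def etaChain (m : ℕ → ℕ) (x : ℕ → ℝ) : ℕ → ℝ → ℝ
  | 0 => fun t => t
  | (j+1) => fun t => ∫ y in (0:ℝ)..t, (x j + etaChain m x j y) ^ (m (j+1))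

/-- `ξ̃_{n-k}` of the chain (reversed indexing):
`ξ̃_n(t) = t w_n^{m_n}`, `ξ̃_i(t) = ∫_0^t (w_i + ξ̃_{i+1}(y))^{m_i} dy`. -/
noncomputable def xiRev (n : ℕ) (m : ℕ → ℕ) (w : ℕ → ℂ) : ℕ → ℝ → ℂ
  | 0 => fun t => (t : ℂ) * (w (n-1)) ^ (m n)
  | (k+1) => fun t => ∫ y in (0:ℝ)..t, (w (n-k-2) + xiRev n m w k y) ^ (m (n-k-1))

/-- Formal antiderivative `∫_0^t` of a polynomial. -/
noncomputable def polyInt (p : Polynomial ℂ) : Polynomial ℂ :=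
  p.sum fun k a => Polynomial.C (a / (k + 1)) * Polynomial.X ^ (k + 1)

/-- Coefficient-wise antiderivative of a polynomial in the commuting symbols `∂_{x_i}`
with coefficients polynomial in `t`. -/
noncomputable def mvPolyInt {n : ℕ} (q : MvPolynomial (Fin n) (Polynomial ℂ)) :
    MvPolynomial (Fin n) (Polynomial ℂ) :=
  ∑ d ∈ q.support, MvPolynomial.monomial d (polyInt (q.coeff d))

/-- Interpretation of a commutative polynomial in the symbols `∂_{x_i}` as a
constant-coefficient differential operator. -/
noncomputable def opOfDeriv {n : ℕ} (P : MvPolynomial (Fin n) ℂ) : DiffOp' n :=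
  ∑ d ∈ P.support, P.coeff d • ((List.finRange n).map fun a => pd' a ^ d a).prod

/-- `(Σ a_k x^k)` coefficients of the Campbell–Hausdorff formula. -/
noncomputable def aCH : ℕ → ℚ
  | 0 => 1
  | (k+1) => ∑ mm ∈ Finset.Icc 1 (k+2), ((-1 : ℚ)) ^ (mm - 1) / mm *
      ∑ p ∈ Finset.Nat.antidiagonalTuple mm (k + 2 - mm),
        ((∏ i : Fin mm, (if i.val = mm - 1 then (p i).factorial
          else ((p i) + 1).factorial : ℕ) : ℕ) : ℚ)⁻¹

end

noncomputable section
variable {n : ℕ} [NeZero n]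

/-- `η_i(t)` for a tree: `η_1(t) = t`,
`η_i(t) = ∫_0^t (x_{p(i)} + η_{p(i)}(y))^{d[(ι_{p(i)},ι_i)]} dy`. -/
noncomputable def etaTree (T : TreeDiagram n) (x : Fin n → ℝ) : Fin n → ℝ → ℝ
  | i => if h : i = 0 then fun t => t
      else fun t => ∫ y in (0:ℝ)..t, (x (T.parent i) + etaTree T x (T.parent i) y) ^ (T.weight i)
termination_by i => i.val
decreasing_by exact T.parent_lt i h

/-- The children of a node. -/
def childFinset (T : TreeDiagram n) (i : Fin n) : Finset (Fin n) :=
  Finset.univ.filter fun s : Fin n => s ≠ 0 ∧ T.parent s = i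

/-- `ξ̃_i(t)` as a polynomial in the commuting symbols `∂_{x_j}` (the variables of the
`MvPolynomial`) with coefficients polynomial in `t`:
`ξ̃_r(t) = t ∂_{x_r}^{m_r}` for tips, and
`ξ̃_i(t) = ∫_0^t (∂_{x_i} + Σ_{ι_s∈Θ_i} ξ̃_s(y))^{m_i} dy` otherwise. -/
noncomputable def xiTree (T : TreeDiagram n) (m : Fin n → ℕ) :
    Fin n → MvPolynomial (Fin n) (Polynomial ℂ)
  | i =>
    if IsTip T i then MvPolynomial.C Polynomial.X * (MvPolynomial.X i) ^ (m i)
    else mvPolyInt ((MvPolynomial.X i +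
      ∑ s ∈ (childFinset T i).attach, xiTree T m s.1) ^ (m i))
termination_by i => n - i.val
decreasing_by
  have hs := s.2
  simp only [childFinset, Finset.mem_filter, Finset.mem_univ, true_and] at hs
  have h1 : T.parent s.1 < s.1 := T.parent_lt s.1 hs.1
  rw [hs.2] at h1
  have h2 := s.1.isLt
  have h3 : i.val < s.1.val := h1
  omega

/-- The operator `ξ_i`: `ξ_1 = ξ̃_1(t)` and `ξ_i = x_{p(i)}·ξ̃_i(t)` for `i ≥ 2`. -/
noncomputable def xiFull (T : TreeDiagram n) (m : Fin n → ℕ) (t : ℂ) (i : Fin n) : DiffOp n :=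
  if i = 0 then opOfDeriv ((xiTree T m i).map (Polynomial.evalRingHom t))
  else mX (T.parent i) * opOfDeriv ((xiTree T m i).map (Polynomial.evalRingHom t))

/-- `D = ∂_{x_1}^{m_1} + Σ_{(ι_i,ι_j)∈E} x_i ∂_{x_j}^{m_j}`. -/
noncomputable def Dtree (T : TreeDiagram n) (m : Fin n → ℕ) : DiffOp n :=
  pd (0 : Fin n) ^ (m 0) +
    ∑ j ∈ Finset.univ.filter (fun j : Fin n => j ≠ 0), mX (T.parent j) * pd j ^ (m j)

/-- The chain tree `T_{A_n}` with all weights `1`. -/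
def chainTree (n : ℕ) [NeZero n] : TreeDiagram n where
  parent := fun i => ⟨i.val - 1, lt_of_le_of_lt (Nat.sub_le _ _) i.isLt⟩
  parent_lt := by
    intro i hi
    have h0 : i.val ≠ 0 := by
      intro h; exact hi (Fin.ext (by simpa using h))
    simp only [Fin.lt_def]
    omega
  weight := fun _ => 1
  weight_pos := fun _ _ => one_pos

end

/-! `Φ_t x = x + η(t, x)` is the flow of the triangular vector field
`V = ∂_{x_1} + Σ_{(ι_i,ι_j)∈E} x_i^{d} ∂_{x_j}`: the semigroup law
`η_i(s + t, x) = η_i(s, x) + η_i(t, Φ_s x)` follows from the integral recursion by induction down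
the tree. Hence `u(s + t, x) = u(t, Φ_s x)`, and differentiating in `s` at `s = 0` gives
`∂_t u = V · ∇_x u`. The differentiability of `u(t, ·)` this needs comes from the fact that
each `η_i` is a polynomial in `(t, x)`. -/

theorem hasDerivAt_comp_flow {𝕜 E F : Type*} [NontriviallyNormedField 𝕜]
    [NormedAddCommGroup E] [NormedSpace 𝕜 E] [NormedAddCommGroup F] [NormedSpace 𝕜 F]
    {Φ : 𝕜 → E → E} {g : E → F} {x v : E} {t : 𝕜}
    (hflow : ∀ s, Φ (s + t) x = Φ t (Φ s x)) (hzero : Φ 0 x = x)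
    (hv : HasDerivAt (fun s => Φ s x) v 0) (hg : DifferentiableAt 𝕜 (g ∘ Φ t) x) :
    HasDerivAt (fun τ => g (Φ τ x)) (fderiv 𝕜 (g ∘ Φ t) x v) t := by
  have h := hg.hasFDerivAt.comp_hasDerivAt_of_eq 0 hv hzero.symm
  rw [← sub_self t] at h
  convert h.comp_sub_const t t using 1
  funext τ
  simp [← hflow]

theorem deriv_comp_update {𝕜 ι F : Type*} [NontriviallyNormedField 𝕜] [Fintype ι]
    [DecidableEq ι] [NormedAddCommGroup F] [NormedSpace 𝕜 F] {g : (ι → 𝕜) → F} {x : ι → 𝕜}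
    (hg : DifferentiableAt 𝕜 g x) (j : ι) :
    deriv (fun s => g (Function.update x j s)) (x j) = fderiv 𝕜 g x (Pi.single j 1) :=
  (hg.hasFDerivAt.comp_hasDerivAt_of_eq (x j) (hasDerivAt_update x j (x j))
    (Function.update_eq_self j x).symm).deriv

namespace Polynomial

variable {R : Type*} [CommRing R] [Algebra ℚ R]

noncomputable def antideriv (p : R[X]) : R[X] :=
  p.sum fun k a => C (((k : ℚ) + 1)⁻¹ • a) * X ^ (k + 1)

theorem derivative_antideriv (p : R[X]) : derivative (antideriv p) = p := by
  conv_rhs => rw [p.as_sum_support_C_mul_X_pow]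
  rw [antideriv, Polynomial.sum, map_sum]
  refine Finset.sum_congr rfl fun k _ => ?_
  rw [derivative_C_mul_X_pow, Nat.add_sub_cancel]
  congr 2
  rw [smul_mul_assoc, mul_comm, ← nsmul_eq_mul, ← Nat.cast_smul_eq_nsmul ℚ, smul_smul,
    Nat.cast_succ, inv_mul_cancel₀ (by positivity), one_smul]

theorem coeff_antideriv_zero (p : R[X]) : (antideriv p).coeff 0 = 0 := by
  simp [antideriv, Polynomial.sum, finsetSum_coeff]

theorem integral_eval₂_eq_eval₂_antideriv (f : R →+* ℝ) (p : R[X]) (t : ℝ) :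
    ∫ y in (0 : ℝ)..t, p.eval₂ f y = (antideriv p).eval₂ f t := by
  have hderiv : ∀ y, HasDerivAt (fun y => (antideriv p).eval₂ f y) (p.eval₂ f y) y := by
    intro y
    simp only [← eval_map]
    simpa [derivative_map, derivative_antideriv] using ((antideriv p).map f).hasDerivAt y
  rw [intervalIntegral.integral_eq_sub_of_hasDerivAt (fun y _ => hderiv y)
    (((p.map f).continuous.congr fun y => eval_map f y).intervalIntegrable _ _)]
  simp [eval₂_at_zero, coeff_antideriv_zero]

end Polynomial

theorem MvPolynomial.contDiff_eval {𝕜 σ : Type*} [NontriviallyNormedField 𝕜] [Fintype σ]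
    (p : MvPolynomial σ 𝕜) {k : WithTop ℕ∞} : ContDiff 𝕜 k fun x : σ → 𝕜 => eval x p := by
  induction p using MvPolynomial.induction_on with
  | C a => simpa using contDiff_const
  | add p q hp hq => simpa using hp.add hq
  | mul_X p i hp => simpa using hp.mul (contDiff_apply 𝕜 𝕜 i)

open Polynomial in
theorem Polynomial.contDiff_eval₂_mvPolynomialEval {𝕜 σ : Type*} [NontriviallyNormedField 𝕜]
    [Fintype σ] (P : (MvPolynomial σ 𝕜)[X]) {k : WithTop ℕ∞} :
    ContDiff 𝕜 k fun p : (σ → 𝕜) × 𝕜 => P.eval₂ (MvPolynomial.eval p.1) p.2 := by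
  simp only [eval₂_eq_sum_range]
  exact ContDiff.sum fun i _ =>
    ((P.coeff i).contDiff_eval.comp contDiff_fst).mul (contDiff_snd.pow i)

namespace TreeDiagram

variable {n : ℕ} [NeZero n] (T : TreeDiagram n)

theorem induction {P : Fin n → Prop} (root : P 0)
    (step : ∀ i, i ≠ 0 → P (T.parent i) → P i) (i : Fin n) : P i := by
  induction i using WellFoundedLT.induction with
  | _ i ih =>
    by_cases hi : i = 0
    · exact hi ▸ root
    · exact step i hi (ih _ (T.parent_lt i hi))

end TreeDiagram

noncomputable section

variable {n : ℕ} [NeZero n] (T : TreeDiagram n)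

theorem etaTree_root (x : Fin n → ℝ) : etaTree T x 0 = id := by
  rw [etaTree]; rfl

theorem etaTree_of_ne_zero (x : Fin n → ℝ) {i : Fin n} (hi : i ≠ 0) :
    etaTree T x i = fun t =>
      ∫ y in (0 : ℝ)..t, (x (T.parent i) + etaTree T x (T.parent i) y) ^ T.weight i := by
  rw [etaTree, dif_neg hi]

theorem etaTree_zero_right (x : Fin n → ℝ) (i : Fin n) : etaTree T x i 0 = 0 := by
  by_cases hi : i = 0
  · rw [hi, etaTree_root, id]
  · simp [etaTree_of_ne_zero T x hi]

open Polynomial in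
theorem exists_polynomial_etaTree (i : Fin n) :
    ∃ P : (MvPolynomial (Fin n) ℝ)[X],
      ∀ x t, etaTree T x i t = P.eval₂ (MvPolynomial.eval x) t := by
  induction i using T.induction with
  | root => exact ⟨X, fun x t => by simp [etaTree_root]⟩
  | step i hi ih =>
    obtain ⟨P, hP⟩ := ih
    refine ⟨antideriv ((C (MvPolynomial.X (T.parent i)) + P) ^ T.weight i), fun x t => ?_⟩
    rw [etaTree_of_ne_zero T x hi, ← integral_eval₂_eq_eval₂_antideriv]
    simp only [eval₂_pow, eval₂_add, eval₂_C, MvPolynomial.eval_X, hP]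

theorem contDiff_etaTree (i : Fin n) {k : WithTop ℕ∞} :
    ContDiff ℝ k fun p : (Fin n → ℝ) × ℝ => etaTree T p.1 i p.2 := by
  obtain ⟨P, hP⟩ := exists_polynomial_etaTree T i
  simpa only [hP] using P.contDiff_eval₂_mvPolynomialEval

theorem continuous_etaTree (x : Fin n → ℝ) (i : Fin n) : Continuous (etaTree T x i) :=
  (contDiff_etaTree T i (k := 0)).continuous.comp (Continuous.prodMk_right x)

theorem differentiable_etaTree (t : ℝ) (i : Fin n) :
    Differentiable ℝ fun x => etaTree T x i t :=
  ((contDiff_etaTree T i (k := 1)).differentiable one_ne_zero).comp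
    (differentiable_id.prodMk (differentiable_const t))

theorem hasDerivAt_etaTree (x : Fin n → ℝ) {i : Fin n} (hi : i ≠ 0) (t : ℝ) :
    HasDerivAt (etaTree T x i) ((x (T.parent i) + etaTree T x (T.parent i) t) ^ T.weight i) t := by
  rw [etaTree_of_ne_zero T x hi]
  exact (((continuous_const.add (continuous_etaTree T x _)).pow _).integral_hasStrictDerivAt
    0 t).hasDerivAt

def treeFlow (t : ℝ) (x : Fin n → ℝ) : Fin n → ℝ := fun i => x i + etaTree T x i t

def treeField (x : Fin n → ℝ) : Fin n → ℝ :=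
  fun j => if j = 0 then 1 else x (T.parent j) ^ T.weight j

theorem etaTree_add (x : Fin n → ℝ) (i : Fin n) (s t : ℝ) :
    etaTree T x i (s + t) = etaTree T x i s + etaTree T (treeFlow T s x) i t := by
  induction i using T.induction generalizing t with
  | root => simp [etaTree_root]
  | step i hi ih =>
    set F := fun y => (x (T.parent i) + etaTree T x (T.parent i) y) ^ T.weight i
    have hF : Continuous F := (continuous_const.add (continuous_etaTree T x _)).pow _
    have hshift : ∫ y in (0 : ℝ)..t, F (y + s) = ∫ y in s..s + t, F y := by
      rw [intervalIntegral.integral_comp_add_right, zero_add, add_comm t]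
    rw [etaTree_of_ne_zero T x hi, etaTree_of_ne_zero T (treeFlow T s x) hi]
    beta_reduce
    rw [← intervalIntegral.integral_add_adjacent_intervals (hF.intervalIntegrable 0 s)
      (hF.intervalIntegrable s (s + t)), ← hshift]
    congr 1
    refine intervalIntegral.integral_congr fun y _ => ?_
    simp only [F, add_comm y s, ih, treeFlow, add_assoc]

theorem treeFlow_zero (x : Fin n → ℝ) : treeFlow T 0 x = x := by
  funext i
  rw [treeFlow, etaTree_zero_right, add_zero]

theorem treeFlow_add (s t : ℝ) (x : Fin n → ℝ) :
    treeFlow T (s + t) x = treeFlow T t (treeFlow T s x) := by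
  funext i
  simp only [treeFlow, etaTree_add T x i s t, add_assoc]

theorem differentiable_treeFlow (t : ℝ) : Differentiable ℝ (treeFlow T t) :=
  differentiable_pi.2 fun i => (differentiable_apply i).add (differentiable_etaTree T t i)

theorem hasDerivAt_treeFlow_zero (x : Fin n → ℝ) :
    HasDerivAt (fun s => treeFlow T s x) (treeField T x) 0 := by
  refine hasDerivAt_pi.2 fun i => HasDerivAt.const_add (x i) ?_
  by_cases hi : i = 0
  · subst hi
    simpa [treeField, etaTree_root] using hasDerivAt_id (0 : ℝ)
  · simpa [treeField, hi, etaTree_zero_right] using hasDerivAt_etaTree T x hi 0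

theorem treeField_eq (x : Fin n → ℝ) :
    treeField T x = Pi.single 0 1 +
      ∑ j ∈ Finset.univ.filter (· ≠ 0), x (T.parent j) ^ T.weight j • Pi.single j 1 := by
  funext i
  by_cases hi : i = 0 <;> simp [treeField, Pi.single_apply, hi]

end

noncomputable section

/-- Theorem 4.3. -/
theorem tree_first_order_solution (n : ℕ) [NeZero n] (T : TreeDiagram n)
    (f : (Fin n → ℝ) → ℝ) (hf : ContDiff ℝ 1 f) :
    let U : ℝ → (Fin n → ℝ) → ℝ := fun t x => f fun i => x i + etaTree T x i t
    (∀ x : Fin n → ℝ, U 0 x = f x) ∧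
    ∀ (t : ℝ) (x : Fin n → ℝ),
      deriv (fun τ => U τ x) t =
        deriv (fun s => U t (Function.update x 0 s)) (x 0) +
          ∑ j ∈ Finset.univ.filter (fun j : Fin n => j ≠ 0),
            (x (T.parent j)) ^ (T.weight j) *
              deriv (fun s => U t (Function.update x j s)) (x j) := by
  intro U
  have hU : ∀ t, U t = f ∘ treeFlow T t := fun t => rfl
  refine ⟨fun x => by rw [hU, Function.comp_apply, treeFlow_zero], fun t x => ?_⟩
  have hdiff : Differentiable ℝ (U t) :=
    (hf.differentiable one_ne_zero).comp (differentiable_treeFlow T t)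
  have htime : HasDerivAt (fun τ => U τ x) (fderiv ℝ (U t) x (treeField T x)) t :=
    hasDerivAt_comp_flow (fun s => treeFlow_add T s t x) (treeFlow_zero T x)
      (hasDerivAt_treeFlow_zero T x) (hdiff x)
  rw [htime.deriv, treeField_eq]
  simp only [deriv_comp_update (hdiff x), map_add, map_sum, map_smul, smul_eq_mul]

end
end

section
/- Let n≥1 and m_1,…,m_n be positive integers. For w=(w_1,…,w_n)∈ℂ^n define polynomials in t by ξ̃_n(t,w)=t·w_n^{m_n} and, for i=n−1 down to 1, ξ̃_i(t,w)=∫_0^t (w_i + ξ̃_{i+1}(y,w))^{m_i} dy. Then the complex-valued function u_w(t,x_1,…,x_n) = exp( ξ̃_1(t,w) + Σ_{i=2}^n x_{i−1}·ξ̃_i(t,w) + Σ_{j=1}^n w_j x_j ) satisfies the evolution equation ∂_t u_w = ∂_{x_1}^{m_1}u_w + Σ_{i=1}^{n−1} x_i ∂_{x_{i+1}}^{m_{i+1}} u_w, and u_w(0,x) = exp(Σ_{j=1}^n w_j x_j). (These functions are the building blocks of the Fourier-series solution of the generalized heat conduction equation of chain type.) -/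
noncomputable section

attribute [local instance 100] LieRing.ofAssociativeRing

variable {n : ℕ} [NeZero n]

end

noncomputable section

/-!
The exponent of `u_w` is affine in `x`: the coefficient of `x_j` is `c_j(t) = w_j + ξ̃_{j+1}(t)`
(with `ξ̃_{n+1} = 0`), so `∂_{x_j}^k u_w = c_j^k u_w`. By the fundamental theorem of calculus
`∂_t ξ̃_i = (w_i + ξ̃_{i+1})^{m_i} = c_i^{m_i}`, and therefore
`∂_t u_w = (c_1^{m_1} + Σ_i x_i c_{i+1}^{m_{i+1}}) u_w`, which is the equation. At `t = 0` all
`ξ̃_i` vanish.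
-/

open Finset Function

section AffineExponential

variable {ι : Type*} [Fintype ι]

theorem sum_update_mul [DecidableEq ι] (x : ι → ℝ) (p : ι) (s : ℝ) (c : ι → ℂ) :
    ∑ j, (update x p s j : ℂ) * c j = ∑ j, (x j : ℂ) * c j + (s - x p) * c p := by
  rw [← add_sum_erase _ _ (mem_univ p), ← add_sum_erase _ _ (mem_univ p),
    sum_congr rfl fun j hj => by rw [update_of_ne (ne_of_mem_erase hj)]]
  simp only [update_self]
  ring

theorem iteratedDeriv_cexp_const_add_mul (a b : ℂ) (k : ℕ) :
    iteratedDeriv k (fun s : ℝ => Complex.exp (a + b * s)) =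
      fun s : ℝ => b ^ k * Complex.exp (a + b * s) := by
  induction k with
  | zero => simp
  | succ k ih =>
    funext s
    have hlin : HasDerivAt (fun s : ℝ => a + b * s) b s := by
      simpa using (Complex.ofRealCLM.hasDerivAt (x := s)).const_mul b |>.const_add a
    rw [iteratedDeriv_succ, ih, (hlin.cexp.const_mul (b ^ k)).deriv]
    ring

theorem iteratedDeriv_cexp_update [DecidableEq ι] (a : ℂ) (c : ι → ℂ) (x : ι → ℝ) (p : ι)
    (k : ℕ) :
    iteratedDeriv k (fun s => Complex.exp (a + ∑ j, (update x p s j : ℂ) * c j)) (x p) =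
      c p ^ k * Complex.exp (a + ∑ j, (x j : ℂ) * c j) := by
  have hline : (fun s : ℝ => Complex.exp (a + ∑ j, (update x p s j : ℂ) * c j)) =
      fun s : ℝ => Complex.exp ((a + ∑ j, (x j : ℂ) * c j - x p * c p) + c p * s) := by
    funext s
    rw [sum_update_mul]
    congr 1
    ring
  rw [hline, iteratedDeriv_cexp_const_add_mul]
  beta_reduce
  congr 2
  ring

theorem HasDerivAt.cexp_add_sum_mul {a : ℝ → ℂ} {c : ι → ℝ → ℂ} {a' : ℂ} {c' : ι → ℂ}
    {t : ℝ} (ha : HasDerivAt a a' t) (hc : ∀ j, HasDerivAt (c j) (c' j) t) (x : ι → ℝ) :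
    HasDerivAt (fun τ => Complex.exp (a τ + ∑ j, (x j : ℂ) * c j τ))
      ((a' + ∑ j, (x j : ℂ) * c' j) * Complex.exp (a t + ∑ j, (x j : ℂ) * c j t)) t := by
  have hsum : HasDerivAt (fun τ => ∑ j, (x j : ℂ) * c j τ) (∑ j, (x j : ℂ) * c' j) t :=
    HasDerivAt.fun_sum fun j _ => (hc j).const_mul (x j : ℂ)
  rw [mul_comm]
  exact (ha.fun_add hsum).cexp

end AffineExponential

section ChainXi

variable {n : ℕ} {m : ℕ → ℕ} {w : ℕ → ℂ}

theorem continuous_xiRev (k : ℕ) : Continuous (xiRev n m w k) := by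
  induction k with
  | zero => exact Complex.continuous_ofReal.mul continuous_const
  | succ k ih =>
    exact continuous_iff_continuousAt.2 fun t =>
      (((continuous_const.add ih).pow _).integral_hasStrictDerivAt 0 t).hasDerivAt.continuousAt

theorem xiRev_apply_zero (k : ℕ) : xiRev n m w k 0 = 0 := by
  cases k <;> simp [xiRev]

/-- The coefficient `w_{p+1} + ξ̃_{p+2}(t)` of `x_{p+1}` in the exponent of `u_w`, with
`ξ̃_{n+1} = 0`; recall that `ξ̃_i` is `xiRev n m w (n - i)`. -/
def chainCoeff (n : ℕ) (m : ℕ → ℕ) (w : ℕ → ℂ) (t : ℝ) (p : ℕ) : ℂ :=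
  w p + if p + 2 ≤ n then xiRev n m w (n - (p + 2)) t else 0

theorem hasDerivAt_xiRev {i : ℕ} (hi : 1 ≤ i) (hin : i ≤ n) (t : ℝ) :
    HasDerivAt (xiRev n m w (n - i)) (chainCoeff n m w t (i - 1) ^ m i) t := by
  obtain rfl | hlt := hin.eq_or_lt
  · simpa [xiRev, chainCoeff, show ¬ (i - 1 + 2 ≤ i) by omega] using
      (Complex.ofRealCLM.hasDerivAt (x := t)).mul_const (w (i - 1) ^ m i)
  · obtain ⟨k, hk⟩ : ∃ k, n - i = k + 1 := ⟨n - i - 1, by omega⟩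
    have hprim : xiRev n m w (k + 1) =
        fun t => ∫ y in (0 : ℝ)..t, (w (i - 1) + xiRev n m w k y) ^ m i := by
      simp only [xiRev, show n - k - 2 = i - 1 by omega, show n - k - 1 = i by omega]
    have hcoeff : chainCoeff n m w t (i - 1) = w (i - 1) + xiRev n m w k t := by
      simp only [chainCoeff, if_pos (show i - 1 + 2 ≤ n by omega),
        show n - (i - 1 + 2) = k by omega]
    rw [hk, hprim, hcoeff]
    exact (((continuous_const.add (continuous_xiRev k)).pow (m i)).integral_hasStrictDerivAt
      0 t).hasDerivAt

theorem hasDerivAt_chainCoeff (p : ℕ) (t : ℝ) :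
    HasDerivAt (fun τ => chainCoeff n m w τ p)
      (if p + 2 ≤ n then chainCoeff n m w t (p + 1) ^ m (p + 2) else 0) t := by
  show HasDerivAt (fun τ => w p + if p + 2 ≤ n then xiRev n m w (n - (p + 2)) τ else 0) _ t
  by_cases hp : p + 2 ≤ n
  · simpa [hp] using
      (hasDerivAt_xiRev (w := w) (m := m) (by omega : 1 ≤ p + 2) hp t).const_add (w p)
  · simpa [hp] using hasDerivAt_const t (w p)

theorem sum_Icc_two_mul_eq (f : ℕ → ℂ) (x : Fin n → ℝ) :
    ∑ i ∈ Icc 2 n, ((if h : i - 2 < n then x ⟨i - 2, h⟩ else 0 : ℝ) : ℂ) * f i =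
      ∑ j : Fin n, (x j : ℂ) * if j.val + 2 ≤ n then f (j + 2) else 0 := by
  cases n with
  | zero => simp
  | succ k =>
      rw [Fin.sum_univ_castSucc, ← Ico_add_one_right_eq_Icc, sum_Ico_eq_sum_range,
        show k + 1 + 1 - 2 = k by omega, sum_range]
      simp only [Fin.val_last, show ¬ (k + 2 ≤ k + 1) by omega, if_false, mul_zero, add_zero]
      refine sum_congr rfl fun i _ => ?_
      simp only [Fin.val_castSucc, if_pos (show (i : ℕ) + 2 ≤ k + 1 by omega), add_comm 2,
        Nat.add_sub_cancel, dif_pos (show (i : ℕ) < k + 1 by omega)]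
      rfl

theorem chain_exponent_eq {v : Fin n → ℂ} (hw : ∀ j : Fin n, w j = v j) (t : ℝ)
    (x : Fin n → ℝ) :
    xiRev n m w (n - 1) t +
        (∑ i ∈ Icc 2 n,
          ((if h : i - 2 < n then x ⟨i - 2, h⟩ else 0 : ℝ) : ℂ) * xiRev n m w (n - i) t) +
        ∑ j : Fin n, v j * (x j : ℂ) =
      xiRev n m w (n - 1) t + ∑ j : Fin n, (x j : ℂ) * chainCoeff n m w t j := by
  rw [sum_Icc_two_mul_eq, add_assoc, ← sum_add_distrib]
  simp only [chainCoeff, hw]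
  congr 1
  exact sum_congr rfl fun j _ => by ring

end ChainXi

theorem chain_heat_building_blocks_general (n : ℕ) (hn : 1 ≤ n) (m : ℕ → ℕ) (w : Fin n → ℂ) :
    let w' : ℕ → ℂ := fun k => if h : k < n then w ⟨k, h⟩ else 0
    let U : ℝ → (Fin n → ℝ) → ℂ := fun t x =>
      Complex.exp (xiRev n m w' (n - 1) t +
        (∑ i ∈ Finset.Icc 2 n,
          ((if h : i - 2 < n then x ⟨i - 2, h⟩ else 0 : ℝ) : ℂ) * xiRev n m w' (n - i) t) +
        ∑ j : Fin n, w j * (x j : ℂ))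
    (∀ x : Fin n → ℝ, U 0 x = Complex.exp (∑ j : Fin n, w j * (x j : ℂ))) ∧
    ∀ (t : ℝ) (x : Fin n → ℝ),
      deriv (fun τ => U τ x) t =
        iteratedDeriv (m 1) (fun s => U t (Function.update x (⟨0, hn⟩ : Fin n) s))
            (x ⟨0, hn⟩) +
          ∑ j : Fin n,
            if hj : j.val + 1 < n then
              (x j : ℂ) *
                iteratedDeriv (m (j.val + 2))
                  (fun s => U t (Function.update x (⟨j.val + 1, hj⟩ : Fin n) s))
                  (x ⟨j.val + 1, hj⟩)
            else 0 := by
  intro w' U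
  have hw : ∀ j : Fin n, w' j = w j := fun j => dif_pos j.isLt
  have hU : ∀ t x, U t x = Complex.exp (xiRev n m w' (n - 1) t +
      ∑ j : Fin n, (x j : ℂ) * chainCoeff n m w' t j) :=
    fun t x => congrArg Complex.exp (chain_exponent_eq hw t x)
  refine ⟨fun x => ?_, fun t x => ?_⟩
  · simp [hU, chainCoeff, xiRev_apply_zero, hw, mul_comm]
  · have htime := (hasDerivAt_xiRev (m := m) (w := w') le_rfl hn t).cexp_add_sum_mul
      (fun j : Fin n => hasDerivAt_chainCoeff (n := n) (m := m) (w := w') j t) x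
    simp only [hU, iteratedDeriv_cexp_update, htime.deriv]
    rw [add_mul, sum_mul]
    congr 1
    refine sum_congr rfl fun j _ => ?_
    by_cases hj : j.val + 1 < n
    · simp only [dif_pos hj, if_pos (show j.val + 2 ≤ n by omega)]
      ring
    · simp [hj, show ¬ (j.val + 2 ≤ n) by omega]

/-- building blocks of Theorem 5.1. -/
theorem chain_heat_building_blocks (n : ℕ) (hn : 1 ≤ n) (m : ℕ → ℕ)
    (hm : ∀ i : ℕ, 1 ≤ i → i ≤ n → 0 < m i) (w : Fin n → ℂ) :
    let w' : ℕ → ℂ := fun k => if h : k < n then w ⟨k, h⟩ else 0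
    let U : ℝ → (Fin n → ℝ) → ℂ := fun t x =>
      Complex.exp (xiRev n m w' (n - 1) t +
        (∑ i ∈ Finset.Icc 2 n,
          ((if h : i - 2 < n then x ⟨i - 2, h⟩ else 0 : ℝ) : ℂ) * xiRev n m w' (n - i) t) +
        ∑ j : Fin n, w j * (x j : ℂ))
    (∀ x : Fin n → ℝ, U 0 x = Complex.exp (∑ j : Fin n, w j * (x j : ℂ))) ∧
    ∀ (t : ℝ) (x : Fin n → ℝ),
      deriv (fun τ => U τ x) t =
        iteratedDeriv (m 1) (fun s => U t (Function.update x (⟨0, hn⟩ : Fin n) s))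
            (x ⟨0, hn⟩) +
          ∑ j : Fin n,
            if hj : j.val + 1 < n then
              (x j : ℂ) *
                iteratedDeriv (m (j.val + 2))
                  (fun s => U t (Function.update x (⟨j.val + 1, hj⟩ : Fin n) s))
                  (x ⟨j.val + 1, hj⟩)
            else 0 :=
  chain_heat_building_blocks_general n hn m w

end
end

section
/- Define a_0=1 and, for each integer k≥1, a_k = Σ_{m=1}^{k+1} ((−1)^{m−1}/m) · Σ 1/((p_1+1)!(p_2+1)!⋯(p_{m−1}+1)!·p_m!), where the inner sum runs over all tuples (p_1,…,p_m) of nonnegative integers with p_1+⋯+p_m = k+1−m. Then the formal power series Σ_{k=0}^∞ a_k x^k equals x/(1−e^{−x}); equivalently, (Σ_{k=0}^∞ a_k x^k)·(1−e^{−x}) = x as formal power series, and also a_k = [(y∂_y)^k/k!](y·ln y/(y−1)) evaluated at y=1. (These a_k are the coefficients in the Campbell–Hausdorff formula ln(e^A e^B) = A + B + Σ_{r≥1} a_r (ad A)^r(B) valid when the ideal generated by B is abelian.) -/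
noncomputable section

variable {n : ℕ} [NeZero n]

attribute [local instance 100] LieRing.ofAssociativeRing

end

/-!
The inner sum in `a_k` is the coefficient of `x^k` in `(e^x - 1)^(m-1) e^x`, so
`Σ a_k x^k = e^x · L(e^x - 1)` with `L(y) = log(1 + y)/y`. Since `log(1 + (e^x - 1)) = x`
(both sides vanish at `0` and have derivative `1`), multiplying by `e^x - 1` gives `x e^x`,
which yields the two formal identities. For the third, the substitution `y = e^t` turns `y ∂_y`
into `∂_t` and `y log y/(y - 1)` into `t/(1 - e^(-t))`; the Leibniz rule applied to
`(t/(1 - e^(-t))) · (1 - e^(-t)) = t` shows that its Taylor series at `0` satisfies the same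
identity as `Σ a_k x^k`.
-/

noncomputable section

open PowerSeries Finset
open scoped ContDiff

namespace PowerSeries

variable {R : Type*} [CommRing R]

theorem coeff_prod_fin {k : ℕ} (f : Fin k → R⟦X⟧) (n : ℕ) :
    coeff n (∏ i, f i) = ∑ p ∈ Nat.antidiagonalTuple k n, ∏ i, coeff (p i) (f i) := by
  classical
  rw [coeff_prod]
  exact sum_equiv Finsupp.equivFunOnFinite (by simp [Nat.mem_antidiagonalTuple]) fun _ _ => rfl

theorem coeff_subst_mul {g : R⟦X⟧} (hg : constantCoeff g = 0) (f h : R⟦X⟧) (n : ℕ) :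
    coeff n (f.subst g * h) = ∑ d ∈ range (n + 1), coeff d f * coeff n (g ^ d * h) := by
  have hs : HasSubst g := HasSubst.of_constantCoeff_zero' hg
  obtain ⟨q, hsplit⟩ : ∃ q, f.subst g = g ^ (n + 1) * q +
      ∑ d ∈ range (n + 1), C (coeff d f) * g ^ d := by
    refine ⟨(mk fun i ↦ coeff (i + (n + 1)) f).subst g, ?_⟩
    conv_lhs => rw [eq_X_pow_mul_shift_add_trunc (n + 1) f]
    rw [subst_add hs, subst_mul hs, subst_pow hs, subst_X hs, subst_coe hs, Polynomial.aeval_def,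
      eval₂_trunc_eq_sum_range]
    rfl
  have hvanish : coeff n (g ^ (n + 1) * (q * h)) = 0 :=
    X_pow_dvd_iff.mp ((pow_dvd_pow_of_dvd (X_dvd_iff.mpr hg) _).mul_right _) n (by omega)
  rw [hsplit, add_mul, map_add, mul_assoc, hvanish, zero_add, sum_mul, map_sum]
  simp_rw [mul_assoc, coeff_C_mul]

theorem log_subst_exp_sub_one (A : Type*) [CommRing A] [Algebra ℚ A] :
    (log A).subst (exp A - 1) = X := by
  have hc : constantCoeff (exp A - 1) = 0 := by simp [constantCoeff_exp]
  have hs : HasSubst (exp A - 1) := HasSubst.of_constantCoeff_zero' hc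
  have hgeom : (1 + X) * d⁄dX A (log A) = 1 := by
    ext n
    rcases n with _ | n
    · simp [deriv_log]
    · simp [deriv_log, add_mul, coeff_succ_X_mul, coeff_one, pow_succ]
  have : IsAddTorsionFree A := ⟨fun n hn a b h => by
    simpa [← Nat.cast_smul_eq_nsmul ℚ, smul_smul, hn] using
      congrArg ((n : ℚ)⁻¹ • ·) h⟩
  refine derivative.ext ?_ ?_
  · rw [derivative_subst hs, derivative_X, map_sub, derivative_exp, Derivation.map_one_eq_zero,
      sub_zero]
    have h := congrArg (substAlgHom hs) hgeom
    rw [map_mul, map_add, map_one, coe_substAlgHom, subst_X hs, add_sub_cancel] at h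
    rw [mul_comm, h]
  · rw [constantCoeff_X]
    exact constantCoeff_subst_eq_zero hc _ constantCoeff_log

end PowerSeries

section Taylor

variable {𝕜 : Type*} [NontriviallyNormedField 𝕜] [CharZero 𝕜]

def taylorSeries (f : 𝕜 → 𝕜) (x : 𝕜) : 𝕜⟦X⟧ :=
  mk fun n => iteratedDeriv n f x / n.factorial

theorem taylorSeries_mul {f g : 𝕜 → 𝕜} {x : 𝕜} (hf : ContDiffAt 𝕜 ∞ f x)
    (hg : ContDiffAt 𝕜 ∞ g x) :
    taylorSeries (f * g) x = taylorSeries f x * taylorSeries g x := by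
  ext n
  simp only [taylorSeries, coeff_mk, coeff_mul, Nat.sum_antidiagonal_eq_sum_range_succ_mk,
    iteratedDeriv_mul (hf.of_le (mod_cast le_top)) (hg.of_le (mod_cast le_top)), sum_div]
  refine sum_congr rfl fun i hi => ?_
  rw [Nat.cast_choose _ (by grind)]
  field_simp [Nat.factorial_ne_zero]

theorem taylorSeries_id (x : 𝕜) : taylorSeries id x = X + C x := by
  ext n
  rcases n with _ | _ | n <;> simp [taylorSeries, iteratedDeriv_id, coeff_X]

end Taylor

theorem AnalyticAt.dslope {𝕜 E : Type*} [NontriviallyNormedField 𝕜] [NormedAddCommGroup E]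
    [NormedSpace 𝕜 E] {f : 𝕜 → E} {a b : 𝕜} (hf : AnalyticAt 𝕜 f b) :
    AnalyticAt 𝕜 (dslope f a) b := by
  rcases eq_or_ne b a with rfl | hba
  · obtain ⟨p, hp⟩ := hf
    exact ⟨p.fslope, hp.has_fpower_series_dslope_fslope⟩
  · refine AnalyticAt.congr ?_ (dslope_eventuallyEq_slope_of_ne f hba).symm
    simp only [slope_fun_def, vsub_eq_sub]
    exact ((analyticAt_id.sub analyticAt_const).inv (sub_ne_zero.mpr hba)).smul
      (hf.sub analyticAt_const)

section FormalSeries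

def chTupleSum (m n : ℕ) : ℚ :=
  ∑ p ∈ Nat.antidiagonalTuple m n,
    ((∏ i : Fin m, (if i.val = m - 1 then (p i).factorial else ((p i) + 1).factorial : ℕ) : ℕ)
      : ℚ)⁻¹

theorem aCH_eq_sum (k : ℕ) :
    aCH k = ∑ d ∈ range (k + 1), (-1 : ℚ) ^ d / (d + 1) * chTupleSum (d + 1) (k - d) := by
  rcases k with _ | k
  · simp [aCH, chTupleSum]
  · rw [aCH, ← Ico_add_one_right_eq_Icc, sum_Ico_eq_sum_range]
    refine sum_congr (by simp) fun d hd => ?_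
    simp only [chTupleSum]
    rw [add_comm 1 d, show k + 2 - (d + 1) = k + 1 - d by omega, Nat.add_sub_cancel,
      Nat.cast_add_one]

def expSubOneDivX : ℚ⟦X⟧ := mk fun n => ((n + 1).factorial : ℚ)⁻¹

def logOneAddDivX : ℚ⟦X⟧ := mk fun n => (-1 : ℚ) ^ n / (n + 1)

theorem X_mul_expSubOneDivX : X * expSubOneDivX = exp ℚ - 1 := by
  ext n
  rcases n with _ | n <;> simp [expSubOneDivX, coeff_succ_X_mul, coeff_exp]

theorem X_mul_logOneAddDivX : X * logOneAddDivX = log ℚ := by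
  ext n
  rcases n with _ | n <;> simp [logOneAddDivX, coeff_succ_X_mul, pow_succ]

theorem coeff_exp_sub_one_pow_mul_exp {d k : ℕ} (h : d ≤ k) :
    coeff k ((exp ℚ - 1) ^ d * exp ℚ) = chTupleSum (d + 1) (k - d) := by
  have hprod : (exp ℚ - 1) ^ d * exp ℚ =
      X ^ d * ∏ i : Fin (d + 1), if i.val = d then exp ℚ else expSubOneDivX := by
    simp [Fin.prod_univ_castSucc, (Fin.is_lt _).ne, ← X_mul_expSubOneDivX, mul_pow, mul_assoc]
  rw [hprod, coeff_X_pow_mul', if_pos h, coeff_prod_fin, chTupleSum, Nat.add_sub_cancel]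
  refine sum_congr rfl fun p _ => ?_
  rw [Nat.cast_prod, ← prod_inv_distrib]
  refine prod_congr rfl fun i _ => ?_
  split_ifs <;> simp [expSubOneDivX, coeff_exp, *]

theorem mk_aCH_eq : mk aCH = exp ℚ * logOneAddDivX.subst (exp ℚ - 1) := by
  ext k
  rw [coeff_mk, aCH_eq_sum, mul_comm, coeff_subst_mul (by simp [constantCoeff_exp])]
  refine sum_congr rfl fun d hd => ?_
  rw [coeff_exp_sub_one_pow_mul_exp (by simpa [Nat.lt_succ_iff] using hd)]
  simp [logOneAddDivX]

theorem mk_aCH_mul_exp_sub_one : mk aCH * (exp ℚ - 1) = X * exp ℚ := by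
  have hs : HasSubst (exp ℚ - 1) := HasSubst.of_constantCoeff_zero' (by simp [constantCoeff_exp])
  rw [mk_aCH_eq, ← log_subst_exp_sub_one, ← X_mul_logOneAddDivX, subst_mul hs, subst_X hs]
  ring

theorem mk_aCH_mul_one_sub_exp_neg : mk aCH * (1 - rescale (-1) (exp ℚ)) = X := by
  have h : exp ℚ * rescale (-1) (exp ℚ) = 1 := exp_mul_exp_neg_eq_one
  calc mk aCH * (1 - rescale (-1) (exp ℚ))
      = mk aCH * (exp ℚ - 1) * rescale (-1) (exp ℚ) := by rw [mul_assoc, sub_mul, h, one_mul]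
    _ = X := by rw [mk_aCH_mul_exp_sub_one, mul_assoc, h, mul_one]

theorem X_mul_mk_neg_one_pow_div_factorial_succ :
    X * PowerSeries.mk (fun i => (-1 : ℚ) ^ i / (i + 1).factorial) =
      1 - rescale (-1) (exp ℚ) := by
  ext n
  rw [map_sub, coeff_one, coeff_rescale, coeff_exp]
  rcases n with _ | n
  · simp
  · simp [coeff_succ_X_mul, pow_succ, div_eq_mul_inv]

theorem mk_aCH_eq_inv :
    mk aCH = (PowerSeries.mk fun i => (-1 : ℚ) ^ i / (i + 1).factorial)⁻¹ := by
  rw [eq_inv_iff_mul_eq_one (by simp)]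
  refine mul_left_cancel₀ X_ne_zero ?_
  rw [mul_left_comm, X_mul_mk_neg_one_pow_div_factorial_succ, mk_aCH_mul_one_sub_exp_neg, mul_one]

end FormalSeries

section RealAnalysis

open Real Set Filter

def eulerOp (g : ℝ → ℝ) : ℝ → ℝ := fun y => y * deriv g y

theorem eqOn_iterate_eulerOp_comp_log {F G : ℝ → ℝ} (hG : ContDiff ℝ ∞ G)
    (hF : EqOn F (G ∘ log) (Ioi 0)) (k : ℕ) :
    EqOn (eulerOp^[k] F) (iteratedDeriv k G ∘ log) (Ioi 0) := by
  induction k with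
  | zero => simpa using hF
  | succ k ih =>
    intro y hy
    have hderiv : HasDerivAt (iteratedDeriv k G ∘ log)
        (iteratedDeriv (k + 1) G (log y) * y⁻¹) y := by
      rw [iteratedDeriv_succ]
      exact ((hG.differentiable_iteratedDeriv k (mod_cast WithTop.coe_lt_top k)) (log y)
        ).hasDerivAt.comp y (hasDerivAt_log (mem_Ioi.mp hy).ne')
    rw [Function.iterate_succ_apply', eulerOp,
      (eventuallyEq_of_mem (Ioi_mem_nhds hy) ih).deriv_eq, hderiv.deriv, Function.comp_apply]
    field_simp [(mem_Ioi.mp hy).ne']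

def oneSubExpNeg : ℝ → ℝ := fun t => 1 - exp (-t)

theorem hasDerivAt_oneSubExpNeg (t : ℝ) : HasDerivAt oneSubExpNeg (exp (-t)) t := by
  unfold oneSubExpNeg
  simpa using ((hasDerivAt_id t).neg.exp).const_sub 1

theorem analyticAt_oneSubExpNeg (t : ℝ) : AnalyticAt ℝ oneSubExpNeg t :=
  analyticAt_const.sub (analyticAt_rexp.comp analyticAt_id.neg)

theorem taylorSeries_oneSubExpNeg :
    taylorSeries oneSubExpNeg 0 =
      PowerSeries.map (algebraMap ℚ ℝ) (1 - rescale (-1) (exp ℚ)) := by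
  ext n
  rw [coeff_map, map_sub, coeff_one, coeff_rescale, coeff_exp, taylorSeries, coeff_mk]
  rcases n with _ | n
  · simp [oneSubExpNeg]
  · unfold oneSubExpNeg
    rw [iteratedDeriv_const_sub n.succ_pos, iteratedDeriv_neg, iteratedDeriv_comp_neg,
      iteratedDeriv_eq_iterate, iter_deriv_exp]
    simp [div_eq_mul_inv]

/-- `t / (1 - e^(-t))`, with the removable singularity at `t = 0` filled in by `dslope`. -/
def toddFun : ℝ → ℝ := fun t => (dslope oneSubExpNeg 0 t)⁻¹

theorem oneSubExpNeg_eq_zero_iff {t : ℝ} : oneSubExpNeg t = 0 ↔ t = 0 := by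
  simp [oneSubExpNeg, sub_eq_zero, eq_comm (a := (1 : ℝ))]

theorem dslope_oneSubExpNeg_of_ne {t : ℝ} (ht : t ≠ 0) :
    dslope oneSubExpNeg 0 t = oneSubExpNeg t / t := by
  simp [dslope_of_ne _ ht, slope_def_field, oneSubExpNeg_eq_zero_iff.mpr rfl]

theorem dslope_oneSubExpNeg_zero : dslope oneSubExpNeg 0 0 = 1 := by
  simp [(hasDerivAt_oneSubExpNeg 0).deriv]

theorem dslope_oneSubExpNeg_ne_zero (t : ℝ) : dslope oneSubExpNeg 0 t ≠ 0 := by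
  rcases eq_or_ne t 0 with rfl | ht
  · exact dslope_oneSubExpNeg_zero ▸ one_ne_zero
  · simp [dslope_oneSubExpNeg_of_ne ht, oneSubExpNeg_eq_zero_iff, ht]

theorem contDiff_toddFun : ContDiff ℝ ∞ toddFun :=
  AnalyticOnNhd.contDiff fun t _ =>
    (analyticAt_oneSubExpNeg t).dslope.inv (dslope_oneSubExpNeg_ne_zero t)

theorem toddFun_mul_oneSubExpNeg : toddFun * oneSubExpNeg = id := by
  ext t
  rcases eq_or_ne t 0 with rfl | ht
  · simp [oneSubExpNeg_eq_zero_iff]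
  · have hU : oneSubExpNeg t ≠ 0 := oneSubExpNeg_eq_zero_iff.not.mpr ht
    simp [toddFun, dslope_oneSubExpNeg_of_ne ht, hU]

theorem eqOn_toddFun_comp_log :
    EqOn (fun y => if y = 1 then 1 else y * log y / (y - 1)) (toddFun ∘ log) (Ioi 0) := by
  intro y hy
  rcases eq_or_ne y 1 with rfl | hy1
  · simp only [if_pos, Function.comp_apply, log_one, toddFun, dslope_oneSubExpNeg_zero, inv_one]
  · have hlog : log y ≠ 0 := log_ne_zero_of_pos_of_ne_one hy hy1
    simp only [if_neg hy1, Function.comp_apply, toddFun, dslope_oneSubExpNeg_of_ne hlog]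
    unfold oneSubExpNeg
    rw [exp_neg, exp_log hy]
    field_simp [sub_ne_zero.mpr hy1, (mem_Ioi.mp hy).ne']

theorem taylorSeries_toddFun :
    taylorSeries toddFun 0 = PowerSeries.map (algebraMap ℚ ℝ) (mk aCH) := by
  have hTodd : taylorSeries toddFun 0 * taylorSeries oneSubExpNeg 0 = X := by
    rw [← taylorSeries_mul contDiff_toddFun.contDiffAt (analyticAt_oneSubExpNeg 0).contDiffAt,
      toddFun_mul_oneSubExpNeg, taylorSeries_id, map_zero, add_zero]
  have hCH : PowerSeries.map (algebraMap ℚ ℝ) (mk aCH) * taylorSeries oneSubExpNeg 0 = X := by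
    rw [taylorSeries_oneSubExpNeg, ← map_mul, mk_aCH_mul_one_sub_exp_neg, map_X]
  have hW : taylorSeries oneSubExpNeg 0 ≠ 0 := by
    intro h0
    rw [h0, mul_zero] at hCH
    exact X_ne_zero hCH.symm
  exact mul_right_cancel₀ hW (hTodd.trans hCH.symm)

end RealAnalysis

/-- (4.12), (4.20), (4.21). -/
theorem campbell_hausdorff_coefficients :
    (PowerSeries.mk aCH =
      (PowerSeries.mk fun i => ((-1 : ℚ)) ^ i / ((i + 1).factorial : ℚ))⁻¹) ∧
    (PowerSeries.mk aCH * (1 - PowerSeries.rescale (-1) (PowerSeries.exp ℚ)) =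
      PowerSeries.X) ∧
    ∀ k : ℕ, (aCH k : ℝ) =
      (((fun g : ℝ → ℝ => fun y => y * deriv g y)^[k]
          (fun y : ℝ => if y = 1 then 1 else y * Real.log y / (y - 1))) 1) /
        (k.factorial : ℝ) := by
  refine ⟨mk_aCH_eq_inv, mk_aCH_mul_one_sub_exp_neg, fun k => ?_⟩
  have hcoeff := congrArg (coeff k) taylorSeries_toddFun
  rw [taylorSeries, coeff_mk, coeff_map, coeff_mk, eq_ratCast] at hcoeff
  have hiter : eulerOp^[k] (fun y => if y = 1 then 1 else y * Real.log y / (y - 1)) 1 =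
      iteratedDeriv k toddFun 0 := by
    simpa using eqOn_iterate_eulerOp_comp_log contDiff_toddFun eqOn_toddFun_comp_log k
      (Set.mem_Ioi.mpr one_pos)
  rw [← hiter] at hcoeff
  exact hcoeff.symm

end
end
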